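/- Fix a real number Ω and define the polynomial map G = (G₃, G₄, G₅) : ℝ³ → ℝ³ by G₃(A,B,D) = (40A³ + 45AB² − 30A + 15√3·B²D + 56πΩ²·A) / (14√(5π)), G₄(A,B,D) = (2/7)·(8A² + 6B² + 3)·Ω² + 15/(28π) + (4/5)·π·Ω⁴, and G₅(A,B,D) = √5·( 75·(8A³ + 9AB² − 6A + 3√3·B²D) + 220·(8A³ + 9AB² + 3√3·B²D)·Ω²·π + 1056·A·Ω⁴·π² ) / (924·π^{3/2}). Then for all (A,B,D) ∈ ℝ³, the determinant of the Jacobian matrix of G at (A,B,D) equals 480√3·B³·Ω⁴·(44πΩ² − 15) / (3773π). In particular, the Jacobian of G at (A,B,D) is invertible whenever B ≠ 0, Ω ≠ 0 and Ω² ≠ 15/(44π). -/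

import Mathlib

open Real

/-- First component `G₃` of the reduced Casimir map. -/
noncomputable def G3 (Ω A B D : ℝ) : ℝ :=
  (40 * A ^ 3 + 45 * A * B ^ 2 - 30 * A + 15 * Real.sqrt 3 * B ^ 2 * D +
    56 * π * Ω ^ 2 * A) / (14 * Real.sqrt (5 * π))

/-- Second component `G₄` of the reduced Casimir map. -/
noncomputable def G4 (Ω A B D : ℝ) : ℝ :=
  (2 / 7) * (8 * A ^ 2 + 6 * B ^ 2 + 3) * Ω ^ 2 + 15 / (28 * π) + (4 / 5) * π * Ω ^ 4

/-- Third component `G₅` of the reduced Casimir map. -/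
noncomputable def G5 (Ω A B D : ℝ) : ℝ :=
  Real.sqrt 5 *
    (75 * (8 * A ^ 3 + 9 * A * B ^ 2 - 6 * A + 3 * Real.sqrt 3 * B ^ 2 * D) +
      220 * (8 * A ^ 3 + 9 * A * B ^ 2 + 3 * Real.sqrt 3 * B ^ 2 * D) * Ω ^ 2 * π +
      1056 * A * Ω ^ 4 * π ^ 2) / (924 * π ^ ((3 : ℝ) / 2))

/-- The Jacobian matrix of `G = (G₃, G₄, G₅)` with respect to `(A, B, D)`. -/
noncomputable def jacG (Ω A B D : ℝ) : Matrix (Fin 3) (Fin 3) ℝ :=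
  Matrix.of
    ![![deriv (fun a => G3 Ω a B D) A, deriv (fun b => G3 Ω A b D) B,
        deriv (fun d => G3 Ω A B d) D],
      ![deriv (fun a => G4 Ω a B D) A, deriv (fun b => G4 Ω A b D) B,
        deriv (fun d => G4 Ω A B d) D],
      ![deriv (fun a => G5 Ω a B D) A, deriv (fun b => G5 Ω A b D) B,
        deriv (fun d => G5 Ω A B d) D]]

/-!
With `P = 8A³ + 9AB² - 6A + 3√3 B²D` one has `G₃ = αP + βA` and `G₅ = γP + δA` for constants
`α, β, γ, δ` depending on `Ω`, while `G₄` does not depend on `D`. Subtracting `γ/α` times the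
first row of the Jacobian from the third leaves a multiple of `(1, 0, 0)`, and the determinant
collapses to `(βγ - αδ) · ∂P/∂D · ∂G₄/∂B`.
-/

noncomputable def partialDerivs (f : ℝ → ℝ → ℝ → ℝ) (A B D : ℝ) : Fin 3 → ℝ :=
  ![deriv (fun a => f a B D) A, deriv (fun b => f A b D) B, deriv (fun d => f A B d) D]

theorem partialDerivs_smul_add_smul_fst (f : ℝ → ℝ → ℝ → ℝ) (α β A B D : ℝ)
    (hf : DifferentiableAt ℝ (fun a => f a B D) A) :
    partialDerivs (fun a b d => α * f a b d + β * a) A B D =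
      α • partialDerivs f A B D + β • ![1, 0, 0] := by
  ext i
  fin_cases i
  · simp only [partialDerivs, Fin.zero_eta, Matrix.cons_val_zero, Pi.add_apply, Pi.smul_apply,
      smul_eq_mul]
    exact ((hf.hasDerivAt.const_mul α).add ((hasDerivAt_id' A).const_mul β)).deriv.trans
      (by ring)
  · simp [partialDerivs]
  · simp [partialDerivs]

theorem det_of_rows_smul_add_smul_fst {R : Type*} [CommRing R] (u v : Fin 3 → R)
    (α β γ δ : R) (hv : v 2 = 0) :
    (Matrix.of ![α • u + β • ![1, 0, 0], v, γ • u + δ • ![1, 0, 0]]).det =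
      (β * γ - α * δ) * u 2 * v 1 := by
  simp only [Matrix.det_fin_three, Matrix.of_apply, Matrix.cons_val_zero, Matrix.cons_val_one,
    Matrix.cons_val_two, Matrix.head_cons, Matrix.tail_cons, Pi.add_apply, Pi.smul_apply,
    smul_eq_mul, hv]
  ring

theorem jacG_eq (Ω A B D : ℝ) :
    jacG Ω A B D = Matrix.of ![partialDerivs (G3 Ω) A B D, partialDerivs (G4 Ω) A B D,
      partialDerivs (G5 Ω) A B D] :=
  rfl

noncomputable def casimirCubic (A B D : ℝ) : ℝ :=
  8 * A ^ 3 + 9 * A * B ^ 2 - 6 * A + 3 * √3 * B ^ 2 * D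

theorem G3_eq (Ω : ℝ) :
    G3 Ω = fun A B D => 5 / (14 * √(5 * π)) * casimirCubic A B D +
      56 * π * Ω ^ 2 / (14 * √(5 * π)) * A := by
  ext A B D
  simp only [G3, casimirCubic]
  ring

theorem G5_eq (Ω : ℝ) :
    G5 Ω = fun A B D => √5 * (75 + 220 * Ω ^ 2 * π) / (924 * π ^ ((3 : ℝ) / 2)) *
      casimirCubic A B D +
      √5 * (1320 * Ω ^ 2 * π + 1056 * Ω ^ 4 * π ^ 2) / (924 * π ^ ((3 : ℝ) / 2)) * A := by
  ext A B D
  simp only [G5, casimirCubic]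
  ring

theorem differentiableAt_casimirCubic_fst (A B D : ℝ) :
    DifferentiableAt ℝ (fun a => casimirCubic a B D) A := by
  unfold casimirCubic
  fun_prop

theorem deriv_casimirCubic_thd (A B D : ℝ) :
    deriv (fun d => casimirCubic A B d) D = 3 * √3 * B ^ 2 := by
  unfold casimirCubic
  simp

theorem deriv_G4_snd (Ω A B D : ℝ) :
    deriv (fun b => G4 Ω A b D) B = 24 / 7 * Ω ^ 2 * B := by
  unfold G4
  simp only [deriv_add_const', deriv_mul_const_field', deriv_const_mul_field', deriv_const_add',
    deriv_pow_field]
  ring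

theorem deriv_G4_thd (Ω A B D : ℝ) : deriv (fun d => G4 Ω A B d) D = 0 := by
  simp [G4]

theorem casimir_coeff_cross (Ω : ℝ) :
    56 * π * Ω ^ 2 / (14 * √(5 * π)) *
        (√5 * (75 + 220 * Ω ^ 2 * π) / (924 * π ^ ((3 : ℝ) / 2))) -
      5 / (14 * √(5 * π)) *
        (√5 * (1320 * Ω ^ 2 * π + 1056 * Ω ^ 4 * π ^ 2) / (924 * π ^ ((3 : ℝ) / 2))) =
    160 * Ω ^ 2 * (44 * π * Ω ^ 2 - 15) / (12936 * π) := by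
  have hπ : 0 < π := pi_pos
  have hsqrtπ : 0 < √π := sqrt_pos.mpr hπ
  have hπ32 : π ^ ((3 : ℝ) / 2) = π * √π := by
    rw [show (3 : ℝ) / 2 = 1 + 1 / 2 by norm_num, rpow_add hπ, rpow_one, sqrt_eq_rpow]
  rw [sqrt_mul (by norm_num) π, hπ32]
  field_simp
  rw [sq_sqrt hπ.le]
  ring

theorem jacG_det_eq (Ω A B D : ℝ) : (jacG Ω A B D).det =
    480 * √3 * B ^ 3 * Ω ^ 4 * (44 * π * Ω ^ 2 - 15) / (3773 * π) := by
  have hP := differentiableAt_casimirCubic_fst A B D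
  rw [jacG_eq, G3_eq, G5_eq, partialDerivs_smul_add_smul_fst _ _ _ _ _ _ hP,
    partialDerivs_smul_add_smul_fst _ _ _ _ _ _ hP,
    det_of_rows_smul_add_smul_fst _ _ _ _ _ _ (deriv_G4_thd Ω A B D), casimir_coeff_cross]
  simp only [partialDerivs, Matrix.cons_val_zero, Matrix.cons_val_one, Matrix.cons_val_two,
    Matrix.head_cons, Matrix.tail_cons, deriv_casimirCubic_thd, deriv_G4_snd]
  field_simp
  ring

/-- **Determinant of the Jacobian of the reduced Casimir map `G = (G₃, G₄, G₅)`**, and its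
invertibility when `B ≠ 0`, `Ω ≠ 0` and `Ω² ≠ 15/(44π)`. -/
theorem stmt16 (Ω : ℝ) : ∀ A B D : ℝ,
    (jacG Ω A B D).det =
      480 * Real.sqrt 3 * B ^ 3 * Ω ^ 4 * (44 * π * Ω ^ 2 - 15) / (3773 * π) ∧
    (B ≠ 0 → Ω ≠ 0 → Ω ^ 2 ≠ 15 / (44 * π) → IsUnit (jacG Ω A B D)) := by
  intro A B D
  refine ⟨jacG_det_eq Ω A B D, fun hB hΩ hΩ2 => ?_⟩
  have hres : 44 * π * Ω ^ 2 - 15 ≠ 0 := by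
    contrapose! hΩ2
    field_simp
    linarith
  rw [Matrix.isUnit_iff_isUnit_det, isUnit_iff_ne_zero, jacG_det_eq]
  have := pi_pos
  positivity
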